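/- arXiv:2002.12838 — 2 statements merged into one kernel-verified Lean document; each statement's English description precedes it below -/
import Mathlib

section
/- Let $n, m \geq 2$ be integers, let $\varepsilon \in \mathbb{C}$ be a primitive $m$-th root of unity, and let $\tilde{R} = \mathbb{C}[y,u,z]/(y^{(n-1)m} z - u^m + 1)$. Let $\sigma$ be the $\mathbb{C}$-algebra automorphism of $\tilde{R}$ determined by $y \mapsto \varepsilon y$, $u \mapsto \varepsilon^{-1} u$, $z \mapsto z$ (it exists since the defining relation is invariant). Then the fixed subalgebra $\tilde{R}^{\sigma} = \{a \in \tilde{R} : \sigma(a) = a\}$ is isomorphic as a $\mathbb{C}$-algebra to $\mathbb{C}[x,w,z]/(x^n z - w^m + x)$. -/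
open MvPolynomial

noncomputable section

/-- The ideal of relations of the surface `S̃ₙ,ₘ = {y^{(n-1)m} z = u^m - 1}`. -/
def relTilde (n m : ℕ) : Ideal (MvPolynomial (Fin 3) ℂ) :=
  Ideal.span {X 0 ^ ((n - 1) * m) * X 2 - X 1 ^ m + 1}

/-- The coordinate ring `ℂ[y,u,z]/(y^{(n-1)m} z - u^m + 1)` of the surface `S̃ₙ,ₘ`. -/
def RTilde (n m : ℕ) : Type :=
  MvPolynomial (Fin 3) ℂ ⧸ relTilde n m

instance (n m : ℕ) : CommRing (RTilde n m) := by unfold RTilde; infer_instance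

instance (n m : ℕ) : Algebra ℂ (RTilde n m) := by unfold RTilde; infer_instance

/-- The image of `y` in `RTilde n m`. -/
def yb (n m : ℕ) : RTilde n m := Ideal.Quotient.mk (relTilde n m) (X 0)

/-- The image of `u` in `RTilde n m`. -/
def ub (n m : ℕ) : RTilde n m := Ideal.Quotient.mk (relTilde n m) (X 1)

/-- The image of `z` in `RTilde n m`. -/
def zb (n m : ℕ) : RTilde n m := Ideal.Quotient.mk (relTilde n m) (X 2)

/-- The ideal of relations of the surface `Sₙ,ₘ = {x^n z = w^m - x}`. -/
def relS (n m : ℕ) : Ideal (MvPolynomial (Fin 3) ℂ) :=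
  Ideal.span {X 0 ^ n * X 2 - X 1 ^ m + X 0}

/-!
The substitution `x ↦ y^m, w ↦ y u, z ↦ z` maps `x^n z - w^m + x` to `y^m (y^{(n-1)m} z - u^m + 1)`,
so it induces `ℂ[x,w,z]/(x^n z - w^m + x) → R̃`, whose image is fixed by `σ`.

Every monomial `y^a u^b z^c` is a `σ`-eigenvector with eigenvalue `ε^(a-b)`, an `m`-th root of
unity. Averaging over `σ^k`, `k < m`, fixes `σ`-invariant elements, kills the monomials with
`a ≢ b [MOD m]` and keeps the others, which are products of `y^m`, `y u`, `z` and
`u^m = y^{(n-1)m} z + 1`; hence the image is the whole fixed subalgebra.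

For injectivity, regard both polynomial rings as polynomials in `w` (resp. `u`) over `ℂ[x,z]`: both
relations are monic of degree `m`, and the substitution is injective and does not raise the degree.
So if the image of `p` lies in the relation ideal of `R̃`, so does the image of the remainder of `p`
modulo the relation of `S`; being of degree `< m`, it vanishes, hence so does that remainder.
-/

open scoped Polynomial

theorem Submodule.mem_of_apply_eq_self_of_mem_span_eigenvectors {K V : Type*} [Field K]
    [AddCommMonoid V] [Module K V] (f : V →ₗ[K] V) (S : Submodule K V) {m : ℕ}
    (hm : (m : K) ≠ 0) {T : Set V}
    (hT : ∀ v ∈ T, ∃ ξ : K, f v = ξ • v ∧ ξ ^ m = 1 ∧ (ξ = 1 → v ∈ S))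
    {r : V} (hrT : r ∈ span K T) (hr : f r = r) : r ∈ S := by
  set average : V →ₗ[K] V := ∑ k ∈ Finset.range m, f ^ k
  have haverage_r : average r = (m : K) • r := by
    simp [average, Module.End.pow_apply, Function.iterate_fixed hr, Nat.cast_smul_eq_nsmul]
  have hT_le : T ⊆ S.comap average := by
    intro v hv
    obtain ⟨ξ, hfv, hξm, hξS⟩ := hT v hv
    have hpow : ∀ k, (f ^ k) v = ξ ^ k • v := fun k => by
      induction k with
      | zero => simp
      | succ k ih => rw [pow_succ, Module.End.mul_apply, hfv, map_smul, ih, smul_smul, pow_succ']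
    have haverage_v : average v = (∑ k ∈ Finset.range m, ξ ^ k) • v := by
      simp [average, hpow, Finset.sum_smul]
    rw [SetLike.mem_coe, mem_comap, haverage_v]
    by_cases hξ : ξ = 1
    · exact S.smul_mem _ (hξS hξ)
    · rw [geom_sum_eq hξ, hξm, sub_self, zero_div, zero_smul]
      exact S.zero_mem
  have := span_le.mpr hT_le hrT
  rwa [mem_comap, haverage_r, S.smul_mem_iff hm] at this

theorem pow_mul_pow_mem_of_modEq {M S : Type*} [CommMonoid M] [SetLike S M] [SubmonoidClass S M]
    {s : S} {y u : M} {m a b : ℕ} (hy : y ^ m ∈ s) (hu : u ^ m ∈ s) (hyu : y * u ∈ s)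
    (hab : a ≡ b [MOD m]) : y ^ a * u ^ b ∈ s := by
  wlog h : a ≤ b generalizing y u a b
  · rw [mul_comm]
    exact this hu hy (mul_comm y u ▸ hyu) hab.symm (by omega)
  obtain ⟨t, ht⟩ := (Nat.modEq_iff_dvd' h).mp hab
  obtain rfl : b = a + m * t := by omega
  rw [pow_add, pow_mul, ← mul_assoc, ← mul_pow]
  exact mul_mem (pow_mem hyu a) (pow_mem hu t)

theorem Polynomial.dvd_of_dvd_map_of_monic {R S : Type*} [CommRing R] [Nontrivial R]
    [CommRing S] [Nontrivial S] (Φ : R[X] →+* S[X]) (hΦ : Function.Injective Φ)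
    (hΦdeg : ∀ p, (Φ p).degree ≤ p.degree) {g : R[X]} {f : S[X]} (hg : g.Monic) (hf : f.Monic)
    (hfg : f.degree = g.degree) (hΦg : f ∣ Φ g) {q : R[X]} (hq : f ∣ Φ q) : g ∣ q := by
  rw [← modByMonic_eq_zero_iff_dvd hg]
  have hdvd : f ∣ Φ (q %ₘ g) := by
    rw [modByMonic_eq_sub_mul_div q g, map_sub, map_mul]
    exact dvd_sub hq (hΦg.mul_right _)
  have hdeg : (Φ (q %ₘ g)).degree < f.degree :=
    (hΦdeg _).trans_lt (hfg ▸ degree_modByMonic_lt q hg)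
  refine hΦ ?_
  rw [map_zero, ← (modByMonic_eq_self_iff hf).mpr hdeg, (modByMonic_eq_zero_iff_dvd hf).mpr hdvd]

namespace CyclicCover

lemma relTilde_succ (k m : ℕ) :
    relTilde (k + 1) m = Ideal.span {X 0 ^ (k * m) * X 2 - X 1 ^ m + 1} := by
  rw [relTilde, Nat.add_sub_cancel]

def mkTilde (n m : ℕ) : MvPolynomial (Fin 3) ℂ →ₐ[ℂ] RTilde n m :=
  Ideal.Quotient.mkₐ ℂ (relTilde n m)

lemma mkTilde_eq_zero_iff {n m : ℕ} {p : MvPolynomial (Fin 3) ℂ} :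
    mkTilde n m p = 0 ↔ p ∈ relTilde n m :=
  Ideal.Quotient.eq_zero_iff_mem

@[simp] lemma mkTilde_X0 (n m : ℕ) : mkTilde n m (X 0) = yb n m := rfl
@[simp] lemma mkTilde_X1 (n m : ℕ) : mkTilde n m (X 1) = ub n m := rfl
@[simp] lemma mkTilde_X2 (n m : ℕ) : mkTilde n m (X 2) = zb n m := rfl

lemma ub_pow_eq (k m : ℕ) :
    ub (k + 1) m ^ m = yb (k + 1) m ^ (k * m) * zb (k + 1) m + 1 := by
  have hrel : X 1 ^ m - (X 0 ^ (k * m) * X 2 + 1) ∈ relTilde (k + 1) m := by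
    rw [relTilde_succ]
    exact Ideal.mem_span_singleton.mpr ⟨-1, by ring⟩
  simpa [sub_eq_zero] using mkTilde_eq_zero_iff.mpr hrel

lemma mem_span_monomials {n m : ℕ} (r : RTilde n m) :
    r ∈ Submodule.span ℂ {v | ∃ a b c : ℕ, v = yb n m ^ a * ub n m ^ b * zb n m ^ c} := by
  obtain ⟨p, rfl⟩ : ∃ p, mkTilde n m p = r := Ideal.Quotient.mkₐ_surjective ℂ _ r
  rw [p.as_sum, map_sum]
  refine Submodule.sum_mem _ fun d _ => ?_
  rw [monomial_eq, ← smul_eq_C_mul, map_smul]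
  refine Submodule.smul_mem _ _ (Submodule.subset_span ⟨d 0, d 1, d 2, ?_⟩)
  rw [Finsupp.prod_fintype _ _ fun i => pow_zero _, Fin.prod_univ_three]
  simp

def coverSubst (m : ℕ) : MvPolynomial (Fin 3) ℂ →ₐ[ℂ] MvPolynomial (Fin 3) ℂ :=
  aeval ![X 0 ^ m, X 0 * X 1, X 2]

@[simp] lemma coverSubst_X0 (m : ℕ) : coverSubst m (X 0) = X 0 ^ m := by simp [coverSubst]
@[simp] lemma coverSubst_X1 (m : ℕ) : coverSubst m (X 1) = X 0 * X 1 := by simp [coverSubst]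
@[simp] lemma coverSubst_X2 (m : ℕ) : coverSubst m (X 2) = X 2 := by simp [coverSubst]

lemma coverSubst_relS_generator (k m : ℕ) :
    coverSubst m (X 0 ^ (k + 1) * X 2 - X 1 ^ m + X 0) =
      X 0 ^ m * (X 0 ^ (k * m) * X 2 - X 1 ^ m + 1) := by
  simp only [map_add, map_sub, map_mul, map_pow, coverSubst_X0, coverSubst_X1, coverSubst_X2]
  ring

def coverHom (k m : ℕ) : (MvPolynomial (Fin 3) ℂ ⧸ relS (k + 1) m) →ₐ[ℂ] RTilde (k + 1) m :=
  Ideal.Quotient.liftₐ _ ((mkTilde _ m).comp (coverSubst m)) fun p hp => by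
    obtain ⟨c, rfl⟩ := Ideal.mem_span_singleton'.mp hp
    rw [AlgHom.comp_apply, map_mul, coverSubst_relS_generator, mkTilde_eq_zero_iff, relTilde_succ]
    exact Ideal.mul_mem_left _ _ (Ideal.mul_mem_left _ _ (Ideal.subset_span rfl))

@[simp] lemma coverHom_mk (k m : ℕ) (p : MvPolynomial (Fin 3) ℂ) :
    coverHom k m (Ideal.Quotient.mk _ p) = mkTilde _ m (coverSubst m p) := rfl

section FixedSubalgebra

variable {k m : ℕ}

lemma yb_pow_mem_range : yb (k + 1) m ^ m ∈ (coverHom k m).range :=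
  ⟨Ideal.Quotient.mk _ (X 0), by simp⟩

lemma yb_mul_ub_mem_range : yb (k + 1) m * ub (k + 1) m ∈ (coverHom k m).range :=
  ⟨Ideal.Quotient.mk _ (X 1), by simp⟩

lemma zb_mem_range : zb (k + 1) m ∈ (coverHom k m).range :=
  ⟨Ideal.Quotient.mk _ (X 2), by simp⟩

lemma ub_pow_mem_range : ub (k + 1) m ^ m ∈ (coverHom k m).range := by
  rw [ub_pow_eq, mul_comm k, pow_mul]
  exact add_mem (mul_mem (pow_mem yb_pow_mem_range k) zb_mem_range) (one_mem _)

variable {ε : ℂ} {σ : RTilde (k + 1) m ≃ₐ[ℂ] RTilde (k + 1) m}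
  (hσy : σ (yb _ m) = ε • yb _ m) (hσu : σ (ub _ m) = ε⁻¹ • ub _ m) (hσz : σ (zb _ m) = zb _ m)
include hσy hσu hσz

lemma range_coverHom_le_equalizer (hm : m ≠ 0) (hε : IsPrimitiveRoot ε m) :
    (coverHom k m).range ≤ AlgHom.equalizer σ.toAlgHom (AlgHom.id ℂ _) := by
  have hcomp : σ.toAlgHom.comp (coverHom k m) = coverHom k m := by
    refine Ideal.Quotient.algHom_ext _ (MvPolynomial.algHom_ext fun i => ?_)
    fin_cases i
    · simp [hσy, smul_pow, hε.pow_eq_one]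
    · simp [hσy, hσu, hε.ne_zero hm]
    · simp [hσz]
  rintro _ ⟨s, rfl⟩
  exact DFunLike.congr_fun hcomp s

lemma apply_monomial (a b c : ℕ) :
    σ (yb _ m ^ a * ub _ m ^ b * zb _ m ^ c) =
      (ε ^ a * ε⁻¹ ^ b) • (yb _ m ^ a * ub _ m ^ b * zb _ m ^ c) := by
  rw [map_mul, map_mul, map_pow, map_pow, map_pow, hσy, hσu, hσz, smul_pow, smul_pow,
    smul_mul_smul_comm, smul_mul_assoc]

lemma mem_range_coverHom_of_apply_eq_self (hm : m ≠ 0) (hε : IsPrimitiveRoot ε m)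
    {r : RTilde (k + 1) m} (hr : σ r = r) : r ∈ (coverHom k m).range := by
  refine Submodule.mem_of_apply_eq_self_of_mem_span_eigenvectors σ.toLinearMap
    (coverHom k m).range.toSubmodule (Nat.cast_ne_zero.mpr hm) ?_ (mem_span_monomials r) hr
  rintro _ ⟨a, b, c, rfl⟩
  refine ⟨ε ^ a * ε⁻¹ ^ b, apply_monomial hσy hσu hσz a b c, ?_, fun hξ => ?_⟩
  · rw [mul_pow, ← pow_mul, ← pow_mul, pow_mul', pow_mul', inv_pow, hε.pow_eq_one]
    simp
  · have hab : a ≡ b [MOD m] := by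
      rw [inv_pow, mul_inv_eq_one₀ (pow_ne_zero _ (hε.ne_zero hm))] at hξ
      rw [hε.eq_orderOf]
      exact (hε.isOfFinOrder hm).pow_eq_pow_iff_modEq.mp hξ
    refine (Subalgebra.mem_toSubmodule _).mpr (mul_mem ?_ (pow_mem zb_mem_range c))
    exact pow_mul_pow_mem_of_modEq yb_pow_mem_range ub_pow_mem_range
      yb_mul_ub_mem_range hab

end FixedSubalgebra

-- `ℂ[x, w, z] ≃ ℂ[x, z][w]`, with `x, z` becoming `X 0, X 1` of the coefficient ring
def equivPolynomialInX1 : MvPolynomial (Fin 3) ℂ ≃ₐ[ℂ] (MvPolynomial (Fin 2) ℂ)[X] :=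
  (renameEquiv ℂ (Equiv.swap 0 1)).trans (finSuccEquiv ℂ 2)

@[simp] lemma equivPolynomialInX1_X0 : equivPolynomialInX1 (X 0) = Polynomial.C (X 0) := by
  simp only [equivPolynomialInX1, AlgEquiv.trans_apply, renameEquiv_apply, rename_X,
    Equiv.swap_apply_left]
  exact finSuccEquiv_X_succ (j := 0)

@[simp] lemma equivPolynomialInX1_X1 : equivPolynomialInX1 (X 1) = Polynomial.X := by
  simp only [equivPolynomialInX1, AlgEquiv.trans_apply, renameEquiv_apply, rename_X,
    Equiv.swap_apply_right]
  exact finSuccEquiv_X_zero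

@[simp] lemma equivPolynomialInX1_X2 : equivPolynomialInX1 (X 2) = Polynomial.C (X 1) := by
  simp only [equivPolynomialInX1, AlgEquiv.trans_apply, renameEquiv_apply, rename_X]
  rw [Equiv.swap_apply_of_ne_of_ne (by decide) (by decide)]
  exact finSuccEquiv_X_succ (j := 1)

def expandX0 (m : ℕ) : MvPolynomial (Fin 2) ℂ →ₐ[ℂ] MvPolynomial (Fin 2) ℂ :=
  aeval ![X 0 ^ m, X 1]

lemma eval_expandX0 (m : ℕ) (p : MvPolynomial (Fin 2) ℂ) (v : Fin 2 → ℂ) :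
    eval v (expandX0 m p) = eval ![v 0 ^ m, v 1] p := by
  rw [← aeval_eq_eval, ← aeval_eq_eval, expandX0, ← AlgHom.comp_apply, comp_aeval]
  congr 2
  ext i
  fin_cases i <;> simp

lemma expandX0_injective {m : ℕ} (hm : m ≠ 0) : Function.Injective (expandX0 m) := by
  refine (injective_iff_map_eq_zero _).mpr fun p hp => MvPolynomial.funext fun v => ?_
  obtain ⟨b, hb⟩ := IsAlgClosed.exists_pow_nat_eq (v 0) (Nat.pos_of_ne_zero hm)
  have hv : ![b ^ m, v 1] = v := by
    ext i
    fin_cases i <;> simp [hb]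
  have h := eval_expandX0 m p ![b, v 1]
  simp only [Matrix.cons_val_zero, Matrix.cons_val_one, hv, hp, map_zero] at h
  simpa using h.symm

def coverSubstPoly (m : ℕ) :
    (MvPolynomial (Fin 2) ℂ)[X] →ₐ[ℂ] (MvPolynomial (Fin 2) ℂ)[X] :=
  Polynomial.aevalTower (Polynomial.CAlgHom.comp (expandX0 m)) (Polynomial.C (X 0) * Polynomial.X)

@[simp] lemma coverSubstPoly_C (m : ℕ) (a : MvPolynomial (Fin 2) ℂ) :
    coverSubstPoly m (Polynomial.C a) = Polynomial.C (expandX0 m a) :=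
  Polynomial.aevalTower_C _ _ _

@[simp] lemma coverSubstPoly_X (m : ℕ) :
    coverSubstPoly m Polynomial.X = Polynomial.C (X 0) * Polynomial.X :=
  Polynomial.aevalTower_X _ _

lemma equivPolynomialInX1_coverSubst (m : ℕ) (p : MvPolynomial (Fin 3) ℂ) :
    equivPolynomialInX1 (coverSubst m p) = coverSubstPoly m (equivPolynomialInX1 p) := by
  have h : (equivPolynomialInX1 : _ →ₐ[ℂ] _).comp (coverSubst m) =
      (coverSubstPoly m).comp equivPolynomialInX1 := by
    refine MvPolynomial.algHom_ext fun i => ?_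
    fin_cases i <;> simp [expandX0]
  exact DFunLike.congr_fun h p

lemma coeff_coverSubstPoly (m : ℕ) (p : (MvPolynomial (Fin 2) ℂ)[X]) (i : ℕ) :
    (coverSubstPoly m p).coeff i = expandX0 m (p.coeff i) * X 0 ^ i := by
  induction p using Polynomial.induction_on' with
  | add p q hp hq => simp [hp, hq, add_mul]
  | monomial j a =>
    rw [← Polynomial.C_mul_X_pow_eq_monomial, map_mul, map_pow, coverSubstPoly_C,
      coverSubstPoly_X, mul_pow, ← Polynomial.C_pow, ← mul_assoc, ← Polynomial.C_mul,
      Polynomial.coeff_C_mul_X_pow, Polynomial.coeff_C_mul_X_pow]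
    split_ifs with h
    · rw [h]
    · simp

lemma coverSubstPoly_injective {m : ℕ} (hm : m ≠ 0) : Function.Injective (coverSubstPoly m) := by
  refine (injective_iff_map_eq_zero _).mpr fun p hp => Polynomial.ext fun i => ?_
  have hi := congrArg (Polynomial.coeff · i) hp
  simp only [coeff_coverSubstPoly, Polynomial.coeff_zero, mul_eq_zero, pow_eq_zero_iff',
    X_ne_zero, false_and, or_false] at hi
  rw [Polynomial.coeff_zero, expandX0_injective hm (hi.trans (map_zero _).symm)]

lemma degree_coverSubstPoly_le (m : ℕ) (p : (MvPolynomial (Fin 2) ℂ)[X]) :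
    (coverSubstPoly m p).degree ≤ p.degree :=
  (Polynomial.degree_le_iff_coeff_zero _ _).mpr fun i hi => by
    rw [coeff_coverSubstPoly, Polynomial.coeff_eq_zero_of_degree_lt hi, map_zero, zero_mul]

lemma mem_relS_of_coverSubst_mem_relTilde {k m : ℕ} (hm : m ≠ 0) {p : MvPolynomial (Fin 3) ℂ}
    (h : coverSubst m p ∈ relTilde (k + 1) m) : p ∈ relS (k + 1) m := by
  set fT : (MvPolynomial (Fin 2) ℂ)[X] :=
    Polynomial.X ^ m - Polynomial.C (X 0 ^ (k * m) * X 1 + 1)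
  set gS : (MvPolynomial (Fin 2) ℂ)[X] :=
    Polynomial.X ^ m - Polynomial.C (X 0 ^ (k + 1) * X 1 + X 0)
  have hT : equivPolynomialInX1 (X 0 ^ (k * m) * X 2 - X 1 ^ m + 1) = -fT := by
    simp only [fT, map_add, map_sub, map_mul, map_pow, map_one, equivPolynomialInX1_X0,
      equivPolynomialInX1_X1, equivPolynomialInX1_X2]
    ring
  have hS : equivPolynomialInX1 (X 0 ^ (k + 1) * X 2 - X 1 ^ m + X 0) = -gS := by
    simp only [gS, map_add, map_sub, map_mul, map_pow, equivPolynomialInX1_X0,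
      equivPolynomialInX1_X1, equivPolynomialInX1_X2]
    ring
  have hST : coverSubstPoly m gS = Polynomial.C (X 0 ^ m) * fT := by
    simp only [gS, fT, map_add, map_sub, map_mul, map_pow, map_one, coverSubstPoly_C,
      coverSubstPoly_X, expandX0, aeval_X]
    simp only [Matrix.cons_val_zero, Matrix.cons_val_one, map_pow]
    ring
  rw [relTilde_succ, Ideal.mem_span_singleton, ← map_dvd_iff equivPolynomialInX1, hT,
    equivPolynomialInX1_coverSubst] at h
  rw [relS, Ideal.mem_span_singleton, ← map_dvd_iff equivPolynomialInX1, hS]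
  refine neg_dvd.mpr ?_
  have hdeg : fT.degree = gS.degree := by
    simp only [fT, gS, Polynomial.degree_X_pow_sub_C (Nat.pos_of_ne_zero hm)]
  have hdvd : fT ∣ coverSubstPoly m gS := by
    rw [hST]
    exact dvd_mul_left _ _
  exact Polynomial.dvd_of_dvd_map_of_monic (coverSubstPoly m : _ →+* _)
    (coverSubstPoly_injective hm) (degree_coverSubstPoly_le m)
    (Polynomial.monic_X_pow_sub_C _ hm) (Polynomial.monic_X_pow_sub_C _ hm) hdeg hdvd
    (neg_dvd.mp h)

lemma coverHom_injective {k m : ℕ} (hm : m ≠ 0) : Function.Injective (coverHom k m) := by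
  refine (injective_iff_map_eq_zero _).mpr fun s hs => ?_
  obtain ⟨p, rfl⟩ := Ideal.Quotient.mk_surjective s
  rw [coverHom_mk, mkTilde_eq_zero_iff] at hs
  exact Ideal.Quotient.eq_zero_iff_mem.mpr (mem_relS_of_coverSubst_mem_relTilde hm hs)

end CyclicCover

theorem statement7 (n m : ℕ) (hn : 2 ≤ n) (hm : 2 ≤ m)
    (ε : ℂ) (hε : IsPrimitiveRoot ε m)
    (σ : RTilde n m ≃ₐ[ℂ] RTilde n m)
    (hσy : σ (yb n m) = ε • yb n m)
    (hσu : σ (ub n m) = ε⁻¹ • ub n m)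
    (hσz : σ (zb n m) = zb n m) :
    Nonempty (↥(AlgHom.equalizer σ.toAlgHom (AlgHom.id ℂ (RTilde n m))) ≃ₐ[ℂ]
      (MvPolynomial (Fin 3) ℂ ⧸ relS n m)) := by
  obtain ⟨k, rfl⟩ : ∃ k, n = k + 1 := ⟨n - 1, by omega⟩
  have hm0 : m ≠ 0 := by omega
  have hrange : (CyclicCover.coverHom k m).range =
      AlgHom.equalizer σ.toAlgHom (AlgHom.id ℂ _) :=
    le_antisymm (CyclicCover.range_coverHom_le_equalizer hσy hσu hσz hm0 hε)
      fun _ hr => CyclicCover.mem_range_coverHom_of_apply_eq_self hσy hσu hσz hm0 hε hr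
  exact ⟨((AlgEquiv.ofInjective _ (CyclicCover.coverHom_injective hm0)).trans
    (Subalgebra.equivOfEq _ _ hrange)).symm⟩
end
end

section
/- Let $n, m \geq 2$ be integers, let $\varepsilon \in \mathbb{C}$ be a primitive $m$-th root of unity, and let $\tilde{R} = \mathbb{C}[y,u,z]/(y^{(n-1)m} z - u^m + 1)$. Let $\sigma$ be the $\mathbb{C}$-algebra automorphism of $\tilde{R}$ determined by $y \mapsto \varepsilon y$, $u \mapsto \varepsilon^{-1} u$, $z \mapsto z$, and let $\tilde{R}^{\sigma} = \{a \in \tilde{R} : \sigma(a) = a\}$ be the fixed subalgebra. Then $\tilde{R}$ is an étale $\tilde{R}^{\sigma}$-algebra, i.e., the inclusion $\tilde{R}^{\sigma} \hookrightarrow \tilde{R}$ is formally étale and of finite presentation. -/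
open MvPolynomial

noncomputable section

/-!
The coordinate ring `R` is a Galois extension of `R^σ` with group `⟨σ⟩ ≅ μ_m` in the sense of
Chase–Harrison–Rosenberg: the families `x = (u^k / m, -y^k / m)` and
`x' = (u^(m-k), y^((n-1)m-k) z)`, `0 ≤ k < m`, satisfy `∑ⱼ xⱼ σⁱ(x'ⱼ) = δ_{i,0}` for `i < m`.
For `i = 0` the sum is `u^m - y^((n-1)m) z = 1`; for `0 < i < m` both halves are multiples of
vanishing sums of `m`-th roots of unity. Such Galois coordinates make the trace `∑ᵢ σⁱ` give a dual
basis, so `R` is finite projective, hence flat and finitely presented, over `R^σ`; and they make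
`∑ⱼ xⱼ ⊗ x'ⱼ` a separability idempotent, which kills `Ω[R⁄R^σ]`. A flat, finitely presented,
unramified algebra is étale.
-/

open TensorProduct Finset

theorem Algebra.FormallyUnramified.of_sum_tmul_comm {A S ι : Type*} [CommRing A] [CommRing S]
    [Algebra A S] [Fintype ι] (x y : ι → S) (h1 : ∑ j, x j * y j = 1)
    (hcomm : ∀ s, ∑ j, (s * x j) ⊗ₜ[A] y j = ∑ j, x j ⊗ₜ[A] (y j * s)) :
    Algebra.FormallyUnramified A S := by
  have hD : ∀ s, KaehlerDifferential.D A S s = 0 := fun s => by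
    have h := congrArg (KaehlerDifferential.D A S).tensorProductTo (hcomm s)
    simp only [map_sum, Derivation.tensorProductTo_tmul, Derivation.leibniz, smul_add,
      smul_smul, sum_add_distrib, mul_comm s] at h
    simpa [← sum_smul, h1] using h
  constructor
  rw [← Submodule.subsingleton_iff S, ← subsingleton_iff_bot_eq_top,
    ← KaehlerDifferential.span_range_derivation, eq_comm, Submodule.span_eq_bot]
  rintro _ ⟨s, rfl⟩
  exact hD s

section Galois

variable {K R ι : Type*} [CommRing K] [CommRing R] [Algebra K R] [Fintype ι]
variable (σ : R ≃ₐ[K] R)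

abbrev fixedSubalgebra : Subalgebra K R := AlgHom.equalizer σ.toAlgHom (AlgHom.id K R)

def IsGaloisCoordinates (m : ℕ) (x y : ι → R) : Prop :=
  ∀ i < m, ∑ j, x j * (σ ^ i) (y j) = if i = 0 then 1 else 0

variable {σ}

lemma pow_apply_of_mem_fixedSubalgebra {a : R} (ha : a ∈ fixedSubalgebra σ) (i : ℕ) :
    (σ ^ i) a = a := by
  induction i with
  | zero => rfl
  | succ i ih => rw [pow_succ', AlgEquiv.mul_apply, ih]; exact ha

lemma sum_range_pow_apply_mem_fixedSubalgebra {m : ℕ} (hσm : σ ^ m = 1) (r : R) :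
    ∑ i ∈ range m, (σ ^ i) r ∈ fixedSubalgebra σ := by
  change σ _ = _
  have hshift := sum_range_succ' (fun i => (σ ^ i) r) m
  rw [sum_range_succ, hσm] at hshift
  simp only [map_sum, ← AlgEquiv.mul_apply, ← pow_succ']
  simpa using hshift.symm

variable (σ) in
def galoisTrace (m : ℕ) (hσm : σ ^ m = 1) : R →ₗ[fixedSubalgebra σ] fixedSubalgebra σ where
  toFun r := ⟨∑ i ∈ range m, (σ ^ i) r, sum_range_pow_apply_mem_fixedSubalgebra hσm r⟩
  map_add' r s := Subtype.ext <| by simp [sum_add_distrib]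
  map_smul' a r := Subtype.ext <| by
    change ∑ i ∈ range m, (σ ^ i) (a * r) = a * ∑ i ∈ range m, (σ ^ i) r
    simp only [map_mul, mul_sum, pow_apply_of_mem_fixedSubalgebra a.2]

@[simp]
lemma coe_galoisTrace_apply {m : ℕ} (hσm : σ ^ m = 1) (r : R) :
    (galoisTrace σ m hσm r : R) = ∑ i ∈ range m, (σ ^ i) r := rfl

namespace IsGaloisCoordinates

variable {m : ℕ} {x y : ι → R}

lemma sum_mul_eq_one (hm : 0 < m) (h : IsGaloisCoordinates σ m x y) : ∑ j, x j * y j = 1 := by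
  simpa using h 0 hm

lemma symm (hσm : σ ^ m = 1) (h : IsGaloisCoordinates σ m x y) : IsGaloisCoordinates σ m y x := by
  intro i hi
  rcases Nat.eq_zero_or_pos i with rfl | hpos
  · simpa [mul_comm] using h 0 hi
  rw [if_neg hpos.ne']
  apply (σ ^ (m - i)).injective
  have hinv : ∀ j, (σ ^ (m - i)) (y j * (σ ^ i) (x j)) = x j * (σ ^ (m - i)) (y j) := fun j => by
    rw [map_mul, ← AlgEquiv.mul_apply, ← pow_add, Nat.sub_add_cancel hi.le, hσm, mul_comm]
    rfl
  rw [map_sum, map_zero, Finset.sum_congr rfl fun j _ => hinv j, h (m - i) (by omega),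
    if_neg (by omega)]

lemma sum_galoisTrace_smul (hσm : σ ^ m = 1) (hm : 0 < m) (h : IsGaloisCoordinates σ m x y)
    (r : R) : ∑ j, galoisTrace σ m hσm (y j * r) • x j = r :=
  calc ∑ j, galoisTrace σ m hσm (y j * r) • x j
      = ∑ i ∈ range m, (∑ j, x j * (σ ^ i) (y j)) * (σ ^ i) r := by
        simp only [Subalgebra.smul_def, smul_eq_mul, coe_galoisTrace_apply, map_mul, sum_mul]
        rw [sum_comm]
        exact sum_congr rfl fun i _ => sum_congr rfl fun j _ => by ring
    _ = ∑ i ∈ range m, if i = 0 then (σ ^ i) r else 0 :=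
        sum_congr rfl fun i hi => by rw [h i (mem_range.1 hi), ite_mul, one_mul, zero_mul]
    _ = r := by simp [hm]

lemma sum_tmul_comm (hσm : σ ^ m = 1) (hm : 0 < m) (h : IsGaloisCoordinates σ m x y) (s : R) :
    ∑ j, (s * x j) ⊗ₜ[fixedSubalgebra σ] y j = ∑ j, x j ⊗ₜ[fixedSubalgebra σ] (y j * s) := by
  calc ∑ j, (s * x j) ⊗ₜ[fixedSubalgebra σ] y j
      = ∑ k, (∑ j, galoisTrace σ m hσm (y j * (s * x k)) • x j) ⊗ₜ y k := by
        simp only [h.sum_galoisTrace_smul hσm hm]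
    _ = ∑ j, x j ⊗ₜ (∑ k, galoisTrace σ m hσm (x k * (y j * s)) • y k) := by
        simp only [sum_tmul, tmul_sum, smul_tmul]
        rw [sum_comm]
        exact sum_congr rfl fun j _ => sum_congr rfl fun k _ => by ring_nf
    _ = ∑ j, x j ⊗ₜ[fixedSubalgebra σ] (y j * s) := by
        simp only [(h.symm hσm).sum_galoisTrace_smul hσm hm]

theorem etale (hσm : σ ^ m = 1) (hm : 0 < m) (h : IsGaloisCoordinates σ m x y) :
    Algebra.Etale (fixedSubalgebra σ) R := by
  let coords : R →ₗ[fixedSubalgebra σ] ι → fixedSubalgebra σ :=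
    LinearMap.pi fun j => galoisTrace σ m hσm ∘ₗ LinearMap.mulLeft _ (y j)
  have hsplit : Fintype.linearCombination (fixedSubalgebra σ) x ∘ₗ coords = LinearMap.id :=
    LinearMap.ext (h.sum_galoisTrace_smul hσm hm)
  have : Module.Projective (fixedSubalgebra σ) R := .of_split coords _ hsplit
  have : Module.Finite (fixedSubalgebra σ) R :=
    .of_surjective _ (LinearMap.surjective_of_comp_eq_id _ _ hsplit)
  have : Module.FinitePresentation (fixedSubalgebra σ) R :=
    Module.finitePresentation_of_projective _ _
  have : Algebra.FormallyUnramified (fixedSubalgebra σ) R :=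
    .of_sum_tmul_comm x y (h.sum_mul_eq_one hm) (h.sum_tmul_comm hσm hm)
  exact .of_formallyUnramified_of_flat

end IsGaloisCoordinates

end Galois

lemma AlgEquiv.pow_apply_of_apply_eq_smul {K R : Type*} [CommSemiring K] [Semiring R]
    [Algebra K R] (σ : R ≃ₐ[K] R) {a : R} {c : K} (h : σ a = c • a) (i : ℕ) :
    (σ ^ i) a = c ^ i • a := by
  induction i with
  | zero => simp
  | succ i ih => rw [pow_succ', AlgEquiv.mul_apply, ih, map_smul, h, smul_smul, pow_succ]

lemma IsPrimitiveRoot.sum_range_pow_pow {K : Type*} [Field K] {ζ : K} {m i : ℕ}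
    (hζ : IsPrimitiveRoot ζ m) (hi : i < m) :
    ∑ k ∈ range m, (ζ ^ i) ^ k = if i = 0 then (m : K) else 0 := by
  split_ifs with h0
  · simp [h0]
  · have hne : ζ ^ i ≠ 1 := hζ.pow_ne_one_of_pos_of_lt h0 hi
    rw [geom_sum_eq hne, ← pow_mul, mul_comm, pow_mul, hζ.pow_eq_one, one_pow, sub_self,
      zero_div]

section Cyclic

variable {K R : Type*} [Field K] [CommRing R] [Algebra K R] (σ : R ≃ₐ[K] R) {m : ℕ}

lemma sum_pow_mul_pow_apply_pow_sub_mul {a b : R} {c : K} (ha : σ a = c • a)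
    (hb : b ∈ fixedSubalgebra σ) {N : ℕ} (hc : c ^ N = 1) (hmN : m ≤ N) (i : ℕ) :
    ∑ k : Fin m, a ^ (k : ℕ) * (σ ^ i) (a ^ (N - k) * b) =
      (∑ k ∈ range m, (c ^ i)⁻¹ ^ k) • (a ^ N * b) := by
  rw [← Fin.sum_univ_eq_sum_range, sum_smul]
  refine sum_congr rfl fun k _ => ?_
  have hkN : (k : ℕ) ≤ N := k.2.le.trans hmN
  have hc0 : c ^ i ≠ 0 := pow_ne_zero _ fun h => by
    simp [h, zero_pow (by omega : N ≠ 0)] at hc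
  have hcoef : (c ^ i) ^ (N - k) = (c ^ i)⁻¹ ^ (k : ℕ) := by
    rw [pow_sub₀ _ hc0 hkN, ← pow_mul, mul_comm i, pow_mul, hc, one_pow, one_mul, inv_pow]
  rw [map_mul, map_pow, σ.pow_apply_of_apply_eq_smul ha, pow_apply_of_mem_fixedSubalgebra hb,
    smul_pow, hcoef, smul_mul_assoc, mul_smul_comm, ← mul_assoc, ← pow_add, Nat.add_sub_cancel' hkN]

variable (K m) in
def galoisCoordX (y u : R) : Fin m ⊕ Fin m → R :=
  Sum.elim (fun k => (m : K)⁻¹ • u ^ (k : ℕ)) (fun k => -((m : K)⁻¹ • y ^ (k : ℕ)))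

variable (m) in
def galoisCoordY (q : ℕ) (y u z : R) : Fin m ⊕ Fin m → R :=
  Sum.elim (fun k => u ^ (m - k)) (fun k => y ^ (q - k) * z)

theorem isGaloisCoordinates_galoisCoord {ε : K} (hε : IsPrimitiveRoot ε m) (hm : 0 < m)
    {q : ℕ} (hmq : m ≤ q) (hq : m ∣ q) {y u z : R} (hrel : u ^ m - y ^ q * z = 1)
    (hσy : σ y = ε • y) (hσu : σ u = ε⁻¹ • u) (hσz : σ z = z) :
    IsGaloisCoordinates σ m (galoisCoordX K m y u) (galoisCoordY m q y u z) := by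
  intro i hi
  have hu := sum_pow_mul_pow_apply_pow_sub_mul σ hσu (one_mem _)
    (by rw [inv_pow, hε.pow_eq_one, inv_one]) le_rfl i
  have hy := sum_pow_mul_pow_apply_pow_sub_mul σ hσy hσz
    (by obtain ⟨l, rfl⟩ := hq; rw [pow_mul, hε.pow_eq_one, one_pow]) hmq i
  rw [inv_pow, inv_inv, hε.sum_range_pow_pow hi] at hu
  rw [← inv_pow, hε.inv.sum_range_pow_pow hi] at hy
  simp only [mul_one] at hu
  simp only [Fintype.sum_sum_type, galoisCoordX, galoisCoordY, Sum.elim_inl, Sum.elim_inr,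
    neg_mul, sum_neg_distrib, smul_mul_assoc, ← smul_sum, hu, hy, smul_smul]
  split_ifs
  · have : NeZero m := ⟨hm.ne'⟩
    have : NeZero (m : K) := hε.neZero'
    rw [inv_mul_cancel₀ (NeZero.ne _), one_smul, one_smul, ← sub_eq_add_neg, hrel]
  · simp

end Cyclic

section Surface

variable {n m : ℕ}

lemma ub_pow_sub_yb_pow_mul_zb (n m : ℕ) : ub n m ^ m - yb n m ^ ((n - 1) * m) * zb n m = 1 := by
  have h : Ideal.Quotient.mk (relTilde n m) (X 0 ^ ((n - 1) * m) * X 2 - X 1 ^ m + 1) = 0 :=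
    Ideal.Quotient.eq_zero_iff_mem.2 (Ideal.subset_span rfl)
  simp only [map_add, map_sub, map_mul, map_pow, map_one] at h
  change yb n m ^ ((n - 1) * m) * zb n m - ub n m ^ m + 1 = 0 at h
  linear_combination -h

lemma RTilde.algHom_ext {B : Type*} [Semiring B] [Algebra ℂ B] {f g : RTilde n m →ₐ[ℂ] B}
    (hy : f (yb n m) = g (yb n m)) (hu : f (ub n m) = g (ub n m)) (hz : f (zb n m) = g (zb n m)) :
    f = g := by
  apply Ideal.Quotient.algHom_ext
  apply MvPolynomial.algHom_ext
  intro i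
  fin_cases i
  exacts [hy, hu, hz]

lemma RTilde.pow_eq_one (σ : RTilde n m ≃ₐ[ℂ] RTilde n m) {ε : ℂ} (hε : ε ^ m = 1)
    (hσy : σ (yb n m) = ε • yb n m) (hσu : σ (ub n m) = ε⁻¹ • ub n m)
    (hσz : σ (zb n m) = zb n m) : σ ^ m = 1 := by
  apply AlgEquiv.coe_toAlgHom_injective
  apply RTilde.algHom_ext
  · change (σ ^ m) (yb n m) = yb n m
    rw [σ.pow_apply_of_apply_eq_smul hσy, hε, one_smul]
  · change (σ ^ m) (ub n m) = ub n m
    rw [σ.pow_apply_of_apply_eq_smul hσu, inv_pow, hε, inv_one, one_smul]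
  · exact pow_apply_of_mem_fixedSubalgebra hσz m

end Surface

theorem statement8 (n m : ℕ) (hn : 2 ≤ n) (hm : 2 ≤ m)
    (ε : ℂ) (hε : IsPrimitiveRoot ε m)
    (σ : RTilde n m ≃ₐ[ℂ] RTilde n m)
    (hσy : σ (yb n m) = ε • yb n m)
    (hσu : σ (ub n m) = ε⁻¹ • ub n m)
    (hσz : σ (zb n m) = zb n m) :
    Algebra.Etale (↥(AlgHom.equalizer σ.toAlgHom (AlgHom.id ℂ (RTilde n m)))) (RTilde n m) :=
  (isGaloisCoordinates_galoisCoord σ hε (by omega) (Nat.le_mul_of_pos_left m (by omega))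
    (dvd_mul_left m (n - 1)) (ub_pow_sub_yb_pow_mul_zb n m) hσy hσu hσz).etale
    (RTilde.pow_eq_one σ hε.pow_eq_one hσy hσu hσz) (by omega)

end
end
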